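/- Let λ and w be real constants with λ² < 6, and consider the quintessence system x' = -(3/2)[2x + (w-1)x³ + x(w+1)(y²-1) - √(2/3)λy²], y' = -(3/2)y[(w-1)x² + (w+1)(y²-1) + √(2/3)λx]. The point C = (λ/√6, √(1-λ²/6)) is a zero of the vector field, and the Jacobian matrix of the system at C has eigenvalues (λ²-6)/2 and λ²-3(w+1). Consequently, for -1 < w, the point C is a hyperbolic sink (asymptotically stable) if and only if λ² < 3(1+w), and it is a hyperbolic saddle when 3(1+w) < λ² < 6. -/

import Mathlib

open Polynomial

/-- `x`-component of the quintessence (exponential potential) vector field. -/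
noncomputable def q5x (w lam x y : ℝ) : ℝ :=
  -(3 / 2) * (2 * x + (w - 1) * x ^ 3 + x * (w + 1) * (y ^ 2 - 1)
    - Real.sqrt (2 / 3) * lam * y ^ 2)

/-- `y`-component of the quintessence (exponential potential) vector field. -/
noncomputable def q5y (w lam x y : ℝ) : ℝ :=
  -(3 / 2) * y * ((w - 1) * x ^ 2 + (w + 1) * (y ^ 2 - 1) + Real.sqrt (2 / 3) * lam * x)

/-- The scalar-field dominated critical point `C`. -/
noncomputable def C5 (lam : ℝ) : ℝ × ℝ := (lam / Real.sqrt 6, Real.sqrt (1 - lam ^ 2 / 6))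

/-- Jacobian matrix of the quintessence vector field at a point `p`. -/
noncomputable def jac5 (w lam : ℝ) (p : ℝ × ℝ) : Matrix (Fin 2) (Fin 2) ℝ :=
  !![deriv (fun x => q5x w lam x p.2) p.1, deriv (fun y => q5x w lam p.1 y) p.2;
     deriv (fun x => q5y w lam x p.2) p.1, deriv (fun y => q5y w lam p.1 y) p.2]

/-! Along the locus `y² = 1 - x²`, `√(2/3) λ = 2x`, which contains `C`, both components of the
field vanish identically and the Jacobian has trace `9x² - 3(w + 2)` and determinant
`9(1 - x²)(w + 1 - 2x²)`. At `C` one has `x² = λ²/6`, so these are the sum and product of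
`(λ² - 6)/2` and `λ² - 3(w + 1)`, and the stability statements compare the signs of these
two numbers. -/

theorem Matrix.charpoly_fin_two_eq_mul {R : Type*} [CommRing R] [Nontrivial R]
    (M : Matrix (Fin 2) (Fin 2) R) {a b : R} (htr : M.trace = a + b) (hdet : M.det = a * b) :
    M.charpoly = (X - C a) * (X - C b) := by
  rw [M.charpoly_fin_two, htr, hdet, map_add, map_mul]
  ring

section Derivatives

variable (w lam x y : ℝ)

theorem hasDerivAt_q5x_x :
    HasDerivAt (fun x => q5x w lam x y)
      (-(3 / 2) * (2 + 3 * (w - 1) * x ^ 2 + (w + 1) * (y ^ 2 - 1))) x := by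
  have h := (((((hasDerivAt_id' x).const_mul 2).add ((hasDerivAt_pow 3 x).const_mul (w - 1))).add
    (((hasDerivAt_id' x).mul_const (w + 1)).mul_const (y ^ 2 - 1))).sub_const
      (Real.sqrt (2 / 3) * lam * y ^ 2)).const_mul (-(3 / 2))
  exact h.congr_deriv (by push_cast; ring)

theorem hasDerivAt_q5x_y :
    HasDerivAt (fun y => q5x w lam x y)
      (-3 * y * ((w + 1) * x - Real.sqrt (2 / 3) * lam)) y := by
  have h := ((((hasDerivAt_pow 2 y).sub_const 1).const_mul (x * (w + 1))).const_add
    (2 * x + (w - 1) * x ^ 3) |>.sub ((hasDerivAt_pow 2 y).const_mul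
      (Real.sqrt (2 / 3) * lam))).const_mul (-(3 / 2))
  exact h.congr_deriv (by push_cast; ring)

theorem hasDerivAt_q5y_x :
    HasDerivAt (fun x => q5y w lam x y)
      (-(3 / 2) * y * (2 * (w - 1) * x + Real.sqrt (2 / 3) * lam)) x := by
  have h := (((((hasDerivAt_pow 2 x).const_mul (w - 1)).add_const ((w + 1) * (y ^ 2 - 1))).add
    ((hasDerivAt_id' x).const_mul (Real.sqrt (2 / 3) * lam))).const_mul (-(3 / 2) * y))
  exact h.congr_deriv (by push_cast; ring)

theorem hasDerivAt_q5y_y :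
    HasDerivAt (fun y => q5y w lam x y)
      (-(3 / 2) * ((w - 1) * x ^ 2 + (w + 1) * (3 * y ^ 2 - 1)
        + Real.sqrt (2 / 3) * lam * x)) y := by
  have h := ((hasDerivAt_id' y).const_mul (-(3 / 2))).mul
    (((((hasDerivAt_pow 2 y).sub_const 1).const_mul (w + 1)).const_add ((w - 1) * x ^ 2)).add_const
      (Real.sqrt (2 / 3) * lam * x))
  exact h.congr_deriv (by push_cast; ring)

end Derivatives

theorem jac5_eq (w lam : ℝ) (p : ℝ × ℝ) :
    jac5 w lam p =
      !![-(3 / 2) * (2 + 3 * (w - 1) * p.1 ^ 2 + (w + 1) * (p.2 ^ 2 - 1)),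
          -3 * p.2 * ((w + 1) * p.1 - Real.sqrt (2 / 3) * lam);
        -(3 / 2) * p.2 * (2 * (w - 1) * p.1 + Real.sqrt (2 / 3) * lam),
          -(3 / 2) * ((w - 1) * p.1 ^ 2 + (w + 1) * (3 * p.2 ^ 2 - 1)
            + Real.sqrt (2 / 3) * lam * p.1)] := by
  rw [jac5, (hasDerivAt_q5x_x ..).deriv, (hasDerivAt_q5x_y ..).deriv,
    (hasDerivAt_q5y_x ..).deriv, (hasDerivAt_q5y_y ..).deriv]

section ScalarDominated

variable {w lam x y : ℝ} (hy : y ^ 2 = 1 - x ^ 2) (hlam : Real.sqrt (2 / 3) * lam = 2 * x)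
include hy hlam

theorem q5x_eq_zero_of_sq_eq_one_sub_sq : q5x w lam x y = 0 := by
  rw [q5x, hlam, hy]
  ring

theorem q5y_eq_zero_of_sq_eq_one_sub_sq : q5y w lam x y = 0 := by
  rw [q5y, hlam, hy]
  ring

theorem charpoly_jac5_of_sq_eq_one_sub_sq :
    (jac5 w lam (x, y)).charpoly
      = (X - C (3 * x ^ 2 - 3)) * (X - C (6 * x ^ 2 - 3 * (w + 1))) := by
  apply Matrix.charpoly_fin_two_eq_mul <;> simp only [jac5_eq, hlam, hy]
  · rw [Matrix.trace_fin_two_of]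
    ring
  · rw [Matrix.det_fin_two_of]
    linear_combination (-9 * w * (w - 1) * x ^ 2) * hy

end ScalarDominated

theorem C5_fst_sq (lam : ℝ) : (C5 lam).1 ^ 2 = lam ^ 2 / 6 := by
  rw [C5, div_pow, Real.sq_sqrt (by norm_num)]

theorem C5_snd_sq {lam : ℝ} (hlam : lam ^ 2 ≤ 6) : (C5 lam).2 ^ 2 = 1 - (C5 lam).1 ^ 2 := by
  rw [C5_fst_sq, C5, Real.sq_sqrt (by linarith)]

theorem sqrt_two_thirds_mul_eq_two_mul_C5_fst (lam : ℝ) :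
    Real.sqrt (2 / 3) * lam = 2 * (C5 lam).1 := by
  have h6 : Real.sqrt 6 ≠ 0 := by positivity
  have h : Real.sqrt (2 / 3) * Real.sqrt 6 = 2 := by
    rw [← Real.sqrt_mul (by norm_num), show (2 / 3 * 6 : ℝ) = 2 ^ 2 by norm_num,
      Real.sqrt_sq zero_le_two]
  rw [C5]
  field_simp
  linear_combination lam * h

/-- For `λ² < 6` the point `C` is a fixed point of the quintessence system, the Jacobian there
has eigenvalues `(λ²-6)/2` and `λ²-3(w+1)`; hence for `-1 < w` it is a hyperbolic sink iff
`λ² < 3(1+w)`, and a saddle when `3(1+w) < λ² < 6`. -/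
theorem quintessence_point_C_stability (w lam : ℝ) (hlam : lam ^ 2 < 6) :
    (q5x w lam (C5 lam).1 (C5 lam).2 = 0 ∧ q5y w lam (C5 lam).1 (C5 lam).2 = 0) ∧
    (jac5 w lam (C5 lam)).charpoly
      = (X - C ((lam ^ 2 - 6) / 2)) * (X - C (lam ^ 2 - 3 * (w + 1))) ∧
    (-1 < w →
      (((lam ^ 2 - 6) / 2 < 0 ∧ lam ^ 2 - 3 * (w + 1) < 0) ↔ lam ^ 2 < 3 * (1 + w)) ∧
      (3 * (1 + w) < lam ^ 2 → (lam ^ 2 - 6) / 2 < 0 ∧ 0 < lam ^ 2 - 3 * (w + 1))) := by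
  have hy := C5_snd_sq hlam.le
  have hx := sqrt_two_thirds_mul_eq_two_mul_C5_fst lam
  have hcharpoly := charpoly_jac5_of_sq_eq_one_sub_sq (w := w) hy hx
  rw [C5_fst_sq, show 3 * (lam ^ 2 / 6) - 3 = (lam ^ 2 - 6) / 2 by ring,
    show 6 * (lam ^ 2 / 6) = lam ^ 2 by ring] at hcharpoly
  refine ⟨⟨q5x_eq_zero_of_sq_eq_one_sub_sq hy hx, q5y_eq_zero_of_sq_eq_one_sub_sq hy hx⟩,
    hcharpoly, fun _ => ⟨⟨fun h => by linarith [h.2], fun h => ⟨by linarith, by linarith⟩⟩,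
      fun h => ⟨by linarith, by linarith⟩⟩⟩
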